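/- Let a, b, ω > 0 and −a²b < σ < 0, and set γ₀ = √(a² + σ/b). Let φ = (x, y) : [0, ∞) → ℝ² be a solution of the bistable oscillator and put h(t) = x(t)² + y(t)². Then: (i) if a − γ₀ < h(0) ≤ a + γ₀, then a − γ₀ < h(t) ≤ a + γ₀ for all t ≥ 0; and (ii) if h(0) ≥ a + γ₀, then h(t) ≥ a + γ₀ for all t ≥ 0. In other words, both the annulus {a − γ₀ < x² + y² ≤ a + γ₀} and the exterior region {x² + y² ≥ a + γ₀} are forward invariant. -/

import Mathlib

/-!
The squared radius `h = x² + y²` obeys the autonomous scalar equation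
`h' = 2 h g(h) = -2b h (h - (a + γ₀)) (h - (a - γ₀))`, whose right-hand side is locally
Lipschitz and vanishes at `a ± γ₀`. By uniqueness of solutions, `h` cannot reach one of these
equilibria unless it starts there, so by the intermediate value theorem it stays on the side of
each equilibrium on which it starts.
-/

open Set

section Equilibrium

variable {E : Type*} [NormedAddCommGroup E] [NormedSpace ℝ E]

theorem eq_equilibrium_of_eq {F : E → E} (hF : LocallyLipschitz F) {c : E} (hc : F c = 0)
    {h : ℝ → E} (hh : ∀ t ≥ (0 : ℝ), HasDerivAt h (F (h t)) t)
    {s t : ℝ} (hs : 0 ≤ s) (ht : 0 ≤ t) (hsc : h s = c) : h t = c := by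
  have hI : uIcc s t ⊆ Ici 0 := fun r hr => (le_min hs ht).trans hr.1
  have hcont : ContinuousOn h (uIcc s t) := fun r hr =>
    (hh r (hI hr)).continuousAt.continuousWithinAt
  obtain ⟨K, hK⟩ := hF.locallyLipschitzOn.exists_lipschitzOnWith_of_compact
    ((isCompact_uIcc.image_of_continuousOn hcont).union (isCompact_singleton (x := c)))
  have hsol : ∀ r ∈ uIcc s t, ∀ u : Set ℝ, HasDerivWithinAt h (F (h r)) u r :=
    fun r hr u => (hh r (hI hr)).hasDerivWithinAt
  have hconst : ∀ r (u : Set ℝ), HasDerivWithinAt (fun _ => c) (F c) u r := fun r u => by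
    rw [hc]; exact hasDerivWithinAt_const r u c
  have hmem : ∀ r ∈ uIcc s t, h r ∈ h '' uIcc s t ∪ {c} := fun r hr =>
    .inl (mem_image_of_mem h hr)
  rcases le_total s t with hst | hts
  · have hsub : Ico s t ⊆ uIcc s t := Ico_subset_Icc_self.trans Icc_subset_uIcc
    exact ODE_solution_unique_of_mem_Icc_right (fun _ _ => hK) (uIcc_of_le hst ▸ hcont)
      (fun r hr => hsol r (hsub hr) _) (fun r hr => hmem r (hsub hr))
      continuousOn_const (fun r _ => hconst r _) (fun _ _ => .inr rfl) hsc ⟨hst, le_rfl⟩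
  · have hsub : Ioc t s ⊆ uIcc s t := Ioc_subset_Icc_self.trans Icc_subset_uIcc'
    exact ODE_solution_unique_of_mem_Icc_left (fun _ _ => hK) (uIcc_of_ge hts ▸ hcont)
      (fun r hr => hsol r (hsub hr) _) (fun r hr => hmem r (hsub hr))
      continuousOn_const (fun r _ => hconst r _) (fun _ _ => .inr rfl) hsc ⟨le_rfl, hts⟩

end Equilibrium

section ScalarEquilibrium

variable {F : ℝ → ℝ} {c : ℝ} {h : ℝ → ℝ} {s t : ℝ}

theorem eq_equilibrium_of_mem_uIcc (hF : LocallyLipschitz F) (hc : F c = 0)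
    (hh : ∀ t ≥ (0 : ℝ), HasDerivAt h (F (h t)) t) (hs : 0 ≤ s) (ht : 0 ≤ t)
    (hmem : c ∈ uIcc (h s) (h t)) : h s = c := by
  have hI : uIcc s t ⊆ Ici 0 := fun r hr => (le_min hs ht).trans hr.1
  have hcont : ContinuousOn h (uIcc s t) := fun r hr =>
    (hh r (hI hr)).continuousAt.continuousWithinAt
  obtain ⟨r, hr, hrc⟩ := intermediate_value_uIcc hcont hmem
  exact eq_equilibrium_of_eq hF hc hh (hI hr) hs hrc

theorem lt_equilibrium_of_lt (hF : LocallyLipschitz F) (hc : F c = 0)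
    (hh : ∀ t ≥ (0 : ℝ), HasDerivAt h (F (h t)) t) (hs : 0 ≤ s) (ht : 0 ≤ t)
    (hsc : h s < c) : h t < c := by
  by_contra! htc
  exact hsc.ne (eq_equilibrium_of_mem_uIcc hF hc hh hs ht (mem_uIcc_of_le hsc.le htc))

theorem equilibrium_lt_of_lt (hF : LocallyLipschitz F) (hc : F c = 0)
    (hh : ∀ t ≥ (0 : ℝ), HasDerivAt h (F (h t)) t) (hs : 0 ≤ s) (ht : 0 ≤ t)
    (hsc : c < h s) : c < h t := by
  by_contra! htc
  exact hsc.ne' (eq_equilibrium_of_mem_uIcc hF hc hh hs ht (mem_uIcc_of_ge htc hsc.le))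

theorem le_equilibrium_of_le (hF : LocallyLipschitz F) (hc : F c = 0)
    (hh : ∀ t ≥ (0 : ℝ), HasDerivAt h (F (h t)) t) (hs : 0 ≤ s) (ht : 0 ≤ t)
    (hsc : h s ≤ c) : h t ≤ c :=
  not_lt.mp fun htc => (equilibrium_lt_of_lt hF hc hh ht hs htc).not_ge hsc

theorem equilibrium_le_of_le (hF : LocallyLipschitz F) (hc : F c = 0)
    (hh : ∀ t ≥ (0 : ℝ), HasDerivAt h (F (h t)) t) (hs : 0 ≤ s) (ht : 0 ≤ t)
    (hsc : c ≤ h s) : c ≤ h t :=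
  not_lt.mp fun htc => (lt_equilibrium_of_lt hF hc hh ht hs htc).not_ge hsc

end ScalarEquilibrium

theorem hasDerivAt_sq_add_sq_of_rotation {x y : ℝ → ℝ} {ω G t : ℝ}
    (hx : HasDerivAt x (-ω * y t + x t * G) t) (hy : HasDerivAt y (ω * x t + y t * G) t) :
    HasDerivAt (fun s => x s ^ 2 + y s ^ 2) (2 * (x t ^ 2 + y t ^ 2) * G) t :=
  ((hx.pow 2).add (hy.pow 2)).congr_deriv (by push_cast; ring)

theorem stmt_7_general (a b ω σ : ℝ) (hb : 0 < b)
    (hσ1 : -a ^ 2 * b < σ)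
    (x y : ℝ → ℝ)
    (hx : ∀ t ≥ (0 : ℝ), HasDerivAt x
      (-ω * y t + x t * (σ + 2 * a * b * (x t ^ 2 + y t ^ 2) - b * (x t ^ 2 + y t ^ 2) ^ 2)) t)
    (hy : ∀ t ≥ (0 : ℝ), HasDerivAt y
      (ω * x t + y t * (σ + 2 * a * b * (x t ^ 2 + y t ^ 2) - b * (x t ^ 2 + y t ^ 2) ^ 2)) t) :
    let γ := Real.sqrt (a ^ 2 + σ / b)
    let h : ℝ → ℝ := fun t => x t ^ 2 + y t ^ 2
    ((a - γ < h 0 ∧ h 0 ≤ a + γ) → ∀ t ≥ (0 : ℝ), a - γ < h t ∧ h t ≤ a + γ) ∧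
    (a + γ ≤ h 0 → ∀ t ≥ (0 : ℝ), a + γ ≤ h t) := by
  intro γ h
  set F : ℝ → ℝ := fun u => 2 * u * (σ + 2 * a * b * u - b * u ^ 2)
  have hF : LocallyLipschitz F := (by fun_prop : ContDiff ℝ 1 F).locallyLipschitz
  have hh : ∀ t ≥ (0 : ℝ), HasDerivAt h (F (h t)) t := fun t ht =>
    hasDerivAt_sq_add_sq_of_rotation (hx t ht) (hy t ht)
  have hγ : b * γ ^ 2 = a ^ 2 * b + σ := by
    rw [Real.sq_sqrt (by rw [← neg_le_iff_add_nonneg', le_div_iff₀ hb]; linarith)]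
    field_simp
  have hroot : ∀ c, (c - a) ^ 2 = γ ^ 2 → F c = 0 := fun c hc => by
    linear_combination (-2 * b * c) * hc - 2 * c * hγ
  have hplus : F (a + γ) = 0 := hroot _ (by ring)
  have hminus : F (a - γ) = 0 := hroot _ (by ring)
  refine ⟨fun ⟨h0lo, h0hi⟩ t ht => ⟨?_, ?_⟩, fun h0 t ht => ?_⟩
  · exact equilibrium_lt_of_lt hF hminus hh le_rfl ht h0lo
  · exact le_equilibrium_of_le hF hplus hh le_rfl ht h0hi
  · exact equilibrium_le_of_le hF hplus hh le_rfl ht h0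

/-- forward invariance of the annulus {a-γ₀ < x²+y² ≤ a+γ₀} and the
exterior region {x²+y² ≥ a+γ₀}. -/
theorem stmt_7 (a b ω σ : ℝ) (ha : 0 < a) (hb : 0 < b) (hω : 0 < ω)
    (hσ1 : -a ^ 2 * b < σ) (hσ2 : σ < 0)
    (x y : ℝ → ℝ)
    (hx : ∀ t ≥ (0 : ℝ), HasDerivAt x
      (-ω * y t + x t * (σ + 2 * a * b * (x t ^ 2 + y t ^ 2) - b * (x t ^ 2 + y t ^ 2) ^ 2)) t)
    (hy : ∀ t ≥ (0 : ℝ), HasDerivAt y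
      (ω * x t + y t * (σ + 2 * a * b * (x t ^ 2 + y t ^ 2) - b * (x t ^ 2 + y t ^ 2) ^ 2)) t) :
    let γ := Real.sqrt (a ^ 2 + σ / b)
    let h : ℝ → ℝ := fun t => x t ^ 2 + y t ^ 2
    ((a - γ < h 0 ∧ h 0 ≤ a + γ) → ∀ t ≥ (0 : ℝ), a - γ < h t ∧ h t ≤ a + γ) ∧
    (a + γ ≤ h 0 → ∀ t ≥ (0 : ℝ), a + γ ≤ h t) :=
  stmt_7_general a b ω σ hb hσ1 x y hx hy
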